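/- Let σ : {1,…,m} → N be a greedy weighted sequence for weights w (with arbitrary tie-breaking). Then for every t ∈ {0,1,…,m} and all agents i, j ∈ N, it holds that s_i(t) − 1/w_i ≤ s_j(t). -/
import Mathlib


open Finset

/-- Number of occurrences of agent `i` among the first `t` entries of the sequence `σ`
(with 0-indexed entries, these are the indices `t' < t`). -/
def appearCount {N : Type*} [DecidableEq N] (m : ℕ) (σ : Fin m → N) (i : N) (t : ℕ) : ℕ :=
  (Finset.univ.filter fun t' : Fin m => (t' : ℕ) < t ∧ σ t' = i).card

/-- `s_i(t)` : the weighted number of appearances of agent `i` among the first `t` entries. -/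
noncomputable def sVal {N : Type*} [DecidableEq N] (w : N → ℝ) (m : ℕ) (σ : Fin m → N)
    (i : N) (t : ℕ) : ℝ :=
  (appearCount m σ i t : ℝ) / w i

/-- A greedy weighted sequence: each entry `σ(t)` minimizes `s_·(t-1)`, i.e. (with 0-indexed
entries) the `t`-th entry minimizes the weighted count of appearances among indices `< t`. -/
def IsGreedySeq {N : Type*} [DecidableEq N] (w : N → ℝ) (m : ℕ) (σ : Fin m → N) : Prop :=
  ∀ t : Fin m, ∀ j : N, sVal w m σ (σ t) (t : ℕ) ≤ sVal w m σ j (t : ℕ)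


lemma appearCount_succ {N : Type*} [DecidableEq N] (m : ℕ) (σ : Fin m → N) (i : N)
    (t : ℕ) (ht : t < m) :
    appearCount m σ i (t+1) = appearCount m σ i t + (if σ ⟨t, ht⟩ = i then 1 else 0) := by
  unfold appearCount
  by_cases h : σ ⟨t, ht⟩ = i
  · rw [if_pos h]
    have heq : (Finset.univ.filter fun t' : Fin m => (t' : ℕ) < t + 1 ∧ σ t' = i)
        = insert ⟨t, ht⟩ (Finset.univ.filter fun t' : Fin m => (t' : ℕ) < t ∧ σ t' = i) := by
      ext x
      simp only [Finset.mem_filter, Finset.mem_insert, Finset.mem_univ, true_and]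
      constructor
      · rintro ⟨hx, hxi⟩
        rcases Nat.lt_succ_iff_lt_or_eq.mp hx with h' | h'
        · exact Or.inr ⟨h', hxi⟩
        · exact Or.inl (Fin.ext h')
      · rintro (rfl | ⟨hx, hxi⟩)
        · exact ⟨Nat.lt_succ_self t, h⟩
        · exact ⟨Nat.lt_succ_of_lt hx, hxi⟩
    rw [heq, Finset.card_insert_of_notMem (by simp)]
  · rw [if_neg h]
    have heq2 : (Finset.univ.filter fun t' : Fin m => (t' : ℕ) < t + 1 ∧ σ t' = i)
        = (Finset.univ.filter fun t' : Fin m => (t' : ℕ) < t ∧ σ t' = i) := by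
      ext x
      simp only [Finset.mem_filter, Finset.mem_univ, true_and]
      constructor
      · rintro ⟨hx, hxi⟩
        rcases Nat.lt_succ_iff_lt_or_eq.mp hx with h' | h'
        · exact ⟨h', hxi⟩
        · exact absurd hxi (by rw [show x = ⟨t, ht⟩ from Fin.ext h']; exact h)
      · rintro ⟨hx, hxi⟩; exact ⟨Nat.lt_succ_of_lt hx, hxi⟩
    rw [heq2, Nat.add_zero]

/-- along any greedy weighted sequence, `s_i(t) - 1/w_i ≤ s_j(t)` holds for
all `t ∈ {0,1,…,m}` and all agents `i, j`. -/
theorem greedy_seq_balance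
    {N : Type*} [Fintype N] [DecidableEq N]
    (w : N → ℝ) (hw : ∀ i, 0 < w i) (hwsum : ∑ i, w i = 1)
    (m : ℕ) (σ : Fin m → N) (hσ : IsGreedySeq w m σ) :
    ∀ t : ℕ, t ≤ m → ∀ i j : N,
      sVal w m σ i t - 1 / w i ≤ sVal w m σ j t := by
  intro t
  induction t with
  | zero =>
    intro _ i j
    have hi : appearCount m σ i 0 = 0 := by simp [appearCount]
    have hj : appearCount m σ j 0 = 0 := by simp [appearCount]
    have h1 : 0 < 1 / w i := div_pos one_pos (hw i)
    simp only [sVal, hi, hj, Nat.cast_zero, zero_div]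
    linarith
  | succ t ih =>
    intro ht i j
    have ht' : t < m := ht
    have hIH := ih (le_of_lt ht')
    have hsucc : ∀ a, sVal w m σ a (t+1)
        = sVal w m σ a t + (if σ ⟨t, ht'⟩ = a then 1 / w a else 0) := by
      intro a
      unfold sVal
      rw [appearCount_succ m σ a t ht']
      by_cases h : σ ⟨t, ht'⟩ = a
      · rw [if_pos h, if_pos h]
        push_cast
        ring
      · rw [if_neg h, if_neg h]
        push_cast
        ring
    have hmono : ∀ a, sVal w m σ a t ≤ sVal w m σ a (t+1) := by
      intro a
      rw [hsucc a]
      have : (0:ℝ) ≤ (if σ ⟨t, ht'⟩ = a then 1 / w a else 0) := by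
        split
        · exact le_of_lt (div_pos one_pos (hw a))
        · exact le_refl 0
      linarith
    by_cases hik : σ ⟨t, ht'⟩ = i
    · rw [hsucc i, if_pos hik]
      have h1 : sVal w m σ i t ≤ sVal w m σ j t := by
        have := hσ ⟨t, ht'⟩ j
        rwa [hik] at this
      have h2 := hmono j
      linarith
    · rw [hsucc i, if_neg hik]
      have h2 := hmono j
      have := hIH i j
      linarith
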